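/- Let h : ℝ → ℝ be twice differentiable and suppose ḧ(t) + k₂ ḣ(t) + k₁ h(t) ≥ 0 for all t ∈ [a,b], where the polynomial s² + k₂ s + k₁ has two real roots −p₁, −p₂ with p₁, p₂ > 0. If h(a) ≥ 0 and ḣ(a) + p₁ h(a) ≥ 0, then h(t) ≥ 0 for all t ∈ [a,b]. -/

import Mathlib

lemma comparison_first_order (g : ℝ → ℝ) (p a b : ℝ)
    (hdg : Differentiable ℝ g)
    (hineq : ∀ t ∈ Set.Icc a b, deriv g t + p * g t ≥ 0)
    (hga : g a ≥ 0) : ∀ t ∈ Set.Icc a b, g t ≥ 0 := by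
  intro t ht
  set f : ℝ → ℝ := fun t => g t * Real.exp (p * t) with hf
  have hdf : Differentiable ℝ f := hdg.mul (by fun_prop)
  have hderiv : ∀ s, deriv f s = (deriv g s + p * g s) * Real.exp (p * s) := by
    intro s
    have : HasDerivAt f (deriv g s * Real.exp (p * s) +
        g s * (Real.exp (p * s) * p)) s := by
      have he : HasDerivAt (fun y => Real.exp (p * y)) (Real.exp (p * s) * p) s := by
        have h1 := ((hasDerivAt_id s).const_mul p).exp
        simp only [id, mul_one] at h1
        exact h1
      exact ((hdg s).hasDerivAt).mul he
    rw [this.deriv]; ring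
  have hmono : MonotoneOn f (Set.Icc a b) := by
    apply monotoneOn_of_deriv_nonneg (convex_Icc a b) hdf.continuous.continuousOn
      (hdf.differentiableOn.mono interior_subset)
    intro s hs
    rw [hderiv]
    have hs' : s ∈ Set.Icc a b := interior_subset hs
    exact mul_nonneg (hineq s hs') (Real.exp_pos _).le
  have hab : a ∈ Set.Icc a b := ⟨le_refl a, ht.1.trans ht.2⟩
  have := hmono hab ht ht.1
  have hfa : (0:ℝ) ≤ f a := mul_nonneg hga (Real.exp_pos _).le
  have : (0:ℝ) ≤ g t * Real.exp (p * t) := le_trans hfa this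
  nlinarith [Real.exp_pos (p * t)]

theorem ecbf_relative_degree_two (h : ℝ → ℝ) (k₁ k₂ p₁ p₂ a b : ℝ)
    (hp₁ : 0 < p₁) (hp₂ : 0 < p₂)
    (hk₁ : k₁ = p₁ * p₂) (hk₂ : k₂ = p₁ + p₂)
    (hdiff : Differentiable ℝ h) (hdiff' : Differentiable ℝ (deriv h))
    (hecbf : ∀ t ∈ Set.Icc a b,
      deriv (deriv h) t + k₂ * deriv h t + k₁ * h t ≥ 0)
    (ha : h a ≥ 0) (ha' : deriv h a + p₁ * h a ≥ 0) :
    ∀ t ∈ Set.Icc a b, h t ≥ 0 := by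
  set g : ℝ → ℝ := fun t => deriv h t + p₁ * h t with hg
  have hdg : Differentiable ℝ g := hdiff'.add (hdiff.const_mul p₁)
  have hderivg : ∀ s, deriv g s = deriv (deriv h) s + p₁ * deriv h s := by
    intro s
    have : HasDerivAt g (deriv (deriv h) s + p₁ * deriv h s) s :=
      ((hdiff' s).hasDerivAt).add (((hdiff s).hasDerivAt).const_mul p₁)
    exact this.deriv
  have hgpos : ∀ t ∈ Set.Icc a b, g t ≥ 0 := by
    apply comparison_first_order g p₂ a b hdg _ ha'
    intro t ht
    rw [hderivg]
    have := hecbf t ht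
    rw [hk₁, hk₂] at this
    simp only [hg]
    nlinarith [this]
  exact comparison_first_order h p₁ a b hdiff (fun t ht => hgpos t ht) ha
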